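/- arXiv:2601.18516 — 4 statements merged into one kernel-verified Lean document; each statement's English description precedes it below -/
import Mathlib

section
/- Let U, X₁, …, Xₙ be finite random variables and let λ₁, …, λₙ ∈ [0,1] with Σᵢ λᵢ ≤ k for some integer k with 1 ≤ k ≤ n. Then Σᵢ λᵢ I(U; Xᵢ) − I(U; X₁⋯Xₙ) ≤ Σ_{S ⊆ [n], |S| = k} (Σ_{i ∈ S} H(Xᵢ) − H(X_S)). -/
open Finset

variable {Ω : Type*}

/-- Marginal pmf of a random variable `X` under the pmf `p`. -/
noncomputable def marg [Fintype Ω] {α : Type*} [DecidableEq α]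
    (p : Ω → ℝ) (X : Ω → α) (x : α) : ℝ :=
  ∑ ω, if X ω = x then p ω else 0

/-- Shannon entropy of a finite random variable. -/
noncomputable def ent [Fintype Ω] {α : Type*} [Fintype α] [DecidableEq α]
    (p : Ω → ℝ) (X : Ω → α) : ℝ :=
  ∑ x, Real.negMulLog (marg p X x)

/-- Shannon mutual information. -/
noncomputable def mi [Fintype Ω] {α β : Type*} [Fintype α] [DecidableEq α]
    [Fintype β] [DecidableEq β] (p : Ω → ℝ) (X : Ω → α) (Y : Ω → β) : ℝ :=
  ent p X + ent p Y - ent p (fun ω => (X ω, Y ω))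

/-!
Pick a `k`-set `S` maximising `∑_{i ∈ S} I(U; Xᵢ)`. As the `I(U; Xᵢ)` are nonnegative and `λ`
lies in `{0 ≤ λ ≤ 1, ∑ λ ≤ k}`, every element outside `S` is dominated by the smallest one inside,
which gives `∑ λᵢ I(U; Xᵢ) ≤ ∑_{i ∈ S} I(U; Xᵢ)`; data processing gives
`I(U; X_S) ≤ I(U; X₁⋯Xₙ)`. Writing `I(U; Y) = H(Y) - H(Y | U)`, conditional subadditivity
`H(X_S | U) ≤ ∑_{i ∈ S} H(Xᵢ | U)` bounds what remains by the `S`-term of the right-hand side,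
and all other terms are nonnegative by subadditivity. Each entropy inequality is Gibbs'
inequality against a suitable product-form sub-probability.
-/

open Real

section Entropy

variable [Fintype Ω] {p : Ω → ℝ}

lemma marg_nonneg (hp0 : ∀ ω, 0 ≤ p ω) {α : Type*} [DecidableEq α] (X : Ω → α) (x : α) :
    0 ≤ marg p X x :=
  sum_nonneg fun ω _ => by split_ifs <;> simp [hp0 ω]

lemma le_marg (hp0 : ∀ ω, 0 ≤ p ω) {α : Type*} [DecidableEq α] (X : Ω → α) (ω : Ω) :
    p ω ≤ marg p X (X ω) := by
  simpa [marg] using single_le_sum (f := fun ω' => if X ω' = X ω then p ω' else 0)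
    (fun ω' _ => by split_ifs <;> simp [hp0 ω']) (mem_univ ω)

lemma marg_pos (hp0 : ∀ ω, 0 ≤ p ω) {α : Type*} [DecidableEq α] (X : Ω → α) {ω : Ω}
    (hω : p ω ≠ 0) : 0 < marg p X (X ω) :=
  ((hp0 ω).lt_of_ne' hω).trans_le (le_marg hp0 X ω)

lemma sum_marg_mul {α : Type*} [Fintype α] [DecidableEq α] (X : Ω → α) (f : α → ℝ) :
    ∑ x, marg p X x * f x = ∑ ω, p ω * f (X ω) := by
  simp only [marg, sum_mul, ite_mul, zero_mul]
  rw [sum_comm]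
  simp

lemma sum_marg {α : Type*} [Fintype α] [DecidableEq α] (X : Ω → α) :
    ∑ x, marg p X x = ∑ ω, p ω := by
  simpa using sum_marg_mul (p := p) X fun _ => 1

lemma sum_marg_pair_left {α β : Type*} [Fintype α] [DecidableEq α] [DecidableEq β]
    (X : Ω → α) (Y : Ω → β) (y : β) :
    ∑ x, marg p (fun ω => (X ω, Y ω)) (x, y) = marg p Y y := by
  simp only [marg, Prod.mk.injEq]
  rw [sum_comm]
  simp [ite_and]

lemma sum_marg_pair_right {α β : Type*} [DecidableEq α] [Fintype β] [DecidableEq β]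
    (X : Ω → α) (Y : Ω → β) (x : α) :
    ∑ y, marg p (fun ω => (X ω, Y ω)) (x, y) = marg p X x := by
  simp only [marg, Prod.mk.injEq]
  rw [sum_comm]
  simp [ite_and]

lemma marg_comp_of_injective {α β : Type*} [DecidableEq α] [DecidableEq β] (X : Ω → α)
    {f : α → β} (hf : f.Injective) (x : α) :
    marg p (fun ω => f (X ω)) (f x) = marg p X x := by
  simp [marg, hf.eq_iff]

lemma sum_mul_log_marg {α : Type*} [Fintype α] [DecidableEq α] (X : Ω → α) :
    ∑ ω, p ω * log (marg p X (X ω)) = -ent p X := by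
  rw [← sum_marg_mul X fun x => log (marg p X x), ent, ← sum_neg_distrib]
  simp [negMulLog]

lemma ent_comp_of_injective {α β : Type*} [Fintype α] [DecidableEq α] [Fintype β]
    [DecidableEq β] (X : Ω → α) {f : α → β} (hf : f.Injective) :
    ent p (fun ω => f (X ω)) = ent p X := by
  rw [← neg_neg (ent p X), ← sum_mul_log_marg, ← neg_eq_iff_eq_neg.2 (sum_mul_log_marg _)]
  simp only [marg_comp_of_injective X hf]

lemma ent_const (hp1 : ∑ ω, p ω = 1) {α : Type*} [Fintype α] [DecidableEq α] (c : α) :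
    ent p (fun _ => c) = 0 := by
  rw [← neg_eq_zero, ← sum_mul_log_marg]
  simp [marg, hp1]

lemma mul_log_sub_log_le {a b : ℝ} (ha : 0 ≤ a) (hb : 0 ≤ b) (hab : a ≠ 0 → b ≠ 0) :
    a * (log b - log a) ≤ b - a := by
  rcases ha.eq_or_lt with rfl | ha
  · simpa using hb
  · have hb : 0 < b := hb.lt_of_ne' (hab ha.ne')
    have h := log_le_sub_one_of_pos (div_pos hb ha)
    rw [log_div hb.ne' ha.ne'] at h
    calc a * (log b - log a) ≤ a * (b / a - 1) := by gcongr
      _ = b - a := by field_simp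

lemma ent_le_neg_sum_mul_log (hp0 : ∀ ω, 0 ≤ p ω) (hp1 : ∑ ω, p ω = 1) {α : Type*}
    [Fintype α] [DecidableEq α] (X : Ω → α) {b : α → ℝ} (hb0 : ∀ x, 0 ≤ b x)
    (hb1 : ∑ x, b x ≤ 1) (hbX : ∀ ω, p ω ≠ 0 → 0 < b (X ω)) :
    ent p X ≤ -∑ ω, p ω * log (b (X ω)) := by
  have hsupp (x : α) (hx : marg p X x ≠ 0) : b x ≠ 0 := by
    obtain ⟨ω, -, hω⟩ := exists_ne_zero_of_sum_ne_zero hx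
    split_ifs at hω with hXω
    · exact hXω ▸ (hbX ω hω).ne'
    · exact absurd rfl hω
  have key : ∑ x, marg p X x * (log (b x) - log (marg p X x)) ≤ 0 := calc
    _ ≤ ∑ x, (b x - marg p X x) :=
      sum_le_sum fun x _ => mul_log_sub_log_le (marg_nonneg hp0 X x) (hb0 x) (hsupp x)
    _ ≤ 0 := by rw [sum_sub_distrib, sum_marg, hp1]; linarith
  simp only [mul_sub, sum_sub_distrib, sum_marg_mul X (fun x => log (b x)),
    sum_marg_mul X (fun x => log (marg p X x)), sum_mul_log_marg] at key
  linarith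

lemma ent_le_neg_sum_mul (hp0 : ∀ ω, 0 ≤ p ω) (hp1 : ∑ ω, p ω = 1) {α : Type*}
    [Fintype α] [DecidableEq α] (X : Ω → α) {b : α → ℝ} (L : Ω → ℝ) (hb0 : ∀ x, 0 ≤ b x)
    (hb1 : ∑ x, b x ≤ 1) (hbX : ∀ ω, p ω ≠ 0 → 0 < b (X ω) ∧ log (b (X ω)) = L ω) :
    ent p X ≤ -∑ ω, p ω * L ω := by
  refine (ent_le_neg_sum_mul_log hp0 hp1 X hb0 hb1 fun ω hω => (hbX ω hω).1).trans_eq ?_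
  congr 1
  refine sum_congr rfl fun ω _ => ?_
  by_cases hω : p ω = 0
  · simp [hω]
  · rw [(hbX ω hω).2]

noncomputable def condEnt {α υ : Type*} [Fintype α] [DecidableEq α] [Fintype υ]
    [DecidableEq υ] (p : Ω → ℝ) (X : Ω → α) (U : Ω → υ) : ℝ :=
  ent p (fun ω => (U ω, X ω)) - ent p U

lemma mi_eq_ent_sub_condEnt {α υ : Type*} [Fintype α] [DecidableEq α] [Fintype υ]
    [DecidableEq υ] (U : Ω → υ) (X : Ω → α) : mi p U X = ent p X - condEnt p X U := by
  rw [mi, condEnt]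
  ring

lemma condEnt_const (hp1 : ∑ ω, p ω = 1) {α υ : Type*} [Fintype α] [DecidableEq α]
    [Fintype υ] [DecidableEq υ] (X : Ω → α) (c : υ) : condEnt p X (fun _ => c) = ent p X := by
  rw [condEnt, ent_const hp1, sub_zero]
  exact ent_comp_of_injective X (Prod.mk_right_injective c)

lemma mi_const (hp1 : ∑ ω, p ω = 1) {α υ : Type*} [Fintype α] [DecidableEq α]
    [Fintype υ] [DecidableEq υ] (U : Ω → υ) (c : α) : mi p U (fun _ => c) = 0 := by
  rw [mi, ent_const hp1, ent_comp_of_injective U (Prod.mk_left_injective c)]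
  ring

lemma condEnt_pi_le_sum (hp0 : ∀ ω, 0 ≤ p ω) (hp1 : ∑ ω, p ω = 1) {ι α υ : Type*}
    [Fintype ι] [DecidableEq ι] [Fintype α] [DecidableEq α] [Fintype υ] [DecidableEq υ]
    (U : Ω → υ) (Z : ι → Ω → α) :
    condEnt p (fun ω i => Z i ω) U ≤ ∑ i, condEnt p (Z i) U := by
  -- `P(U = u) ∏ᵢ P(Zᵢ = zᵢ | U = u)` is the law under which the `Zᵢ` are independent given `U`
  have hb1 : ∑ y : υ × (ι → α),
      marg p U y.1 * ∏ i, (marg p (fun ω => (U ω, Z i ω)) (y.1, y.2 i) / marg p U y.1) ≤ 1 := by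
    rw [Fintype.sum_prod_type, ← hp1, ← sum_marg U]
    refine sum_le_sum fun u _ => ?_
    dsimp only
    rw [← mul_sum,
      ← Fintype.prod_sum fun i x => marg p (fun ω => (U ω, Z i ω)) (u, x) / marg p U u]
    simp only [← sum_div, sum_marg_pair_right]
    have hu := marg_nonneg hp0 U u
    exact mul_le_of_le_one_right hu
      (prod_le_one (fun _ _ => div_nonneg hu hu) fun _ _ => div_self_le_one _)
  have h := ent_le_neg_sum_mul hp0 hp1 (fun ω => (U ω, fun i => Z i ω))
    (fun ω => log (marg p U (U ω)) +
      ∑ i, (log (marg p (fun ω => (U ω, Z i ω)) (U ω, Z i ω)) - log (marg p U (U ω))))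
    (fun y => mul_nonneg (marg_nonneg hp0 U _)
      (prod_nonneg fun i _ => div_nonneg (marg_nonneg hp0 _ _) (marg_nonneg hp0 U _)))
    hb1 fun ω hω => by
      have hU := marg_pos hp0 U hω
      have hUZ i := div_pos (marg_pos hp0 (fun ω => (U ω, Z i ω)) hω) hU
      refine ⟨mul_pos hU (prod_pos fun i _ => hUZ i), ?_⟩
      rw [log_mul hU.ne' (prod_pos fun i _ => hUZ i).ne', log_prod fun i _ => (hUZ i).ne']
      simp only [log_div (marg_pos hp0 _ hω).ne' hU.ne']
  simp only [mul_add, sum_add_distrib, mul_sum] at h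
  rw [sum_comm] at h
  simp only [mul_sub, sum_sub_distrib, sum_mul_log_marg, sum_neg_distrib] at h
  simp only [condEnt, sum_sub_distrib]
  linarith

lemma ent_pi_le_sum (hp0 : ∀ ω, 0 ≤ p ω) (hp1 : ∑ ω, p ω = 1) {ι α : Type*} [Fintype ι]
    [DecidableEq ι] [Fintype α] [DecidableEq α] (Z : ι → Ω → α) :
    ent p (fun ω i => Z i ω) ≤ ∑ i, ent p (Z i) := by
  simpa only [condEnt_const hp1] using condEnt_pi_le_sum hp0 hp1 (fun _ => ()) Z

lemma mi_comp_le (hp0 : ∀ ω, 0 ≤ p ω) (hp1 : ∑ ω, p ω = 1) {α β υ : Type*} [Fintype α]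
    [DecidableEq α] [Fintype β] [DecidableEq β] [Fintype υ] [DecidableEq υ]
    (U : Ω → υ) (W : Ω → α) (f : α → β) :
    mi p U (fun ω => f (W ω)) ≤ mi p U W := by
  -- Gibbs against `P(W = w) P(U = u | f(W) = f(w))`
  have hb1 : ∑ y : υ × α, marg p W y.2 *
      (marg p (fun ω => (U ω, f (W ω))) (y.1, f y.2) / marg p (fun ω => f (W ω)) (f y.2))
      ≤ 1 := by
    rw [Fintype.sum_prod_type_right, ← hp1, ← sum_marg W]
    refine sum_le_sum fun w _ => ?_
    dsimp only
    rw [← mul_sum, ← sum_div, sum_marg_pair_left]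
    exact mul_le_of_le_one_right (marg_nonneg hp0 W w) (div_self_le_one _)
  have h := ent_le_neg_sum_mul hp0 hp1 (fun ω => (U ω, W ω))
    (fun ω => log (marg p W (W ω)) + (log (marg p (fun ω => (U ω, f (W ω))) (U ω, f (W ω)))
      - log (marg p (fun ω => f (W ω)) (f (W ω)))))
    (fun y => mul_nonneg (marg_nonneg hp0 W _)
      (div_nonneg (marg_nonneg hp0 _ _) (marg_nonneg hp0 _ _)))
    hb1 fun ω hω => by
      have hW := marg_pos hp0 W hω
      have hUf := marg_pos hp0 (fun ω => (U ω, f (W ω))) hω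
      have hf := marg_pos hp0 (fun ω => f (W ω)) hω
      exact ⟨mul_pos hW (div_pos hUf hf), by
        rw [log_mul hW.ne' (div_pos hUf hf).ne', log_div hUf.ne' hf.ne']⟩
  simp only [mul_add, mul_sub, sum_add_distrib, sum_sub_distrib] at h
  simp only [mi]
  linarith [sum_mul_log_marg (p := p) W, sum_mul_log_marg (p := p) (fun ω => (U ω, f (W ω))),
    sum_mul_log_marg (p := p) (fun ω => f (W ω))]

lemma mi_nonneg (hp0 : ∀ ω, 0 ≤ p ω) (hp1 : ∑ ω, p ω = 1) {α υ : Type*} [Fintype α]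
    [DecidableEq α] [Fintype υ] [DecidableEq υ] (U : Ω → υ) (X : Ω → α) : 0 ≤ mi p U X :=
  mi_const hp1 U () ▸ mi_comp_le hp0 hp1 U X fun _ => ()

lemma sum_mi_sub_mi_le (hp0 : ∀ ω, 0 ≤ p ω) (hp1 : ∑ ω, p ω = 1) {ι α υ : Type*}
    [Fintype ι] [DecidableEq ι] [Fintype α] [DecidableEq α] [Fintype υ] [DecidableEq υ]
    (U : Ω → υ) (Z : ι → Ω → α) :
    ∑ i, mi p U (Z i) - mi p U (fun ω i => Z i ω)
      ≤ ∑ i, ent p (Z i) - ent p (fun ω i => Z i ω) := by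
  simp only [mi_eq_ent_sub_condEnt, sum_sub_distrib]
  linarith [condEnt_pi_le_sum hp0 hp1 U Z]

end Entropy

lemma exists_card_eq_forall_le {ι M : Type*} [Fintype ι] [AddCommMonoid M] [LinearOrder M]
    [IsOrderedCancelAddMonoid M] {k : ℕ} (hk : k ≤ Fintype.card ι) (g : ι → M) :
    ∃ S : Finset ι, #S = k ∧ ∀ i ∈ S, ∀ j ∉ S, g j ≤ g i := by
  classical
  -- a `k`-set of maximal weight cannot be improved by swapping an element in for one out
  obtain ⟨S, hS, hmax⟩ := exists_max_image (univ.powersetCard k) (fun T => ∑ i ∈ T, g i)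
    (powersetCard_nonempty.2 (by simpa using hk))
  have hSk := (mem_powersetCard.1 hS).2
  refine ⟨S, hSk, fun i hi j hj => ?_⟩
  have hj' : j ∉ S.erase i := fun h => hj (mem_of_mem_erase h)
  have hswap := hmax (insert j (S.erase i)) <| mem_powersetCard.2
    ⟨subset_univ _, by rw [card_insert_of_notMem hj', card_erase_add_one hi, hSk]⟩
  rw [sum_insert hj', ← add_sum_erase S g hi] at hswap
  exact le_of_add_le_add_right hswap

lemma sum_mul_le_sum_of_threshold {ι K : Type*} [Fintype ι] [CommRing K] [LinearOrder K]
    [IsStrictOrderedRing K] {S : Finset ι} {g lam : ι → K} {m : K} (hm : 0 ≤ m)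
    (hin : ∀ i ∈ S, m ≤ g i) (hout : ∀ j ∉ S, g j ≤ m) (hlam : ∀ i, lam i ∈ Set.Icc 0 1)
    (hsum : ∑ i, lam i ≤ #S) :
    ∑ i, lam i * g i ≤ ∑ i ∈ S, g i := by
  classical
  have hcompl : ∑ j ∈ Sᶜ, lam j ≤ ∑ i ∈ S, (1 - lam i) := by
    rw [sum_sub_distrib, sum_const, nsmul_one]
    linarith [sum_add_sum_compl S lam]
  calc ∑ i, lam i * g i = ∑ i ∈ S, lam i * g i + ∑ j ∈ Sᶜ, lam j * g j :=
        (sum_add_sum_compl S _).symm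
    _ ≤ ∑ i ∈ S, lam i * g i + ∑ j ∈ Sᶜ, lam j * m := by
        gcongr with j hj
        · exact (hlam j).1
        · exact hout j (mem_compl.1 hj)
    _ ≤ ∑ i ∈ S, lam i * g i + ∑ i ∈ S, (1 - lam i) * m := by
        rw [← sum_mul, ← sum_mul]
        gcongr
    _ ≤ ∑ i ∈ S, lam i * g i + ∑ i ∈ S, (1 - lam i) * g i := by
        gcongr with i hi
        · linarith [(hlam i).2]
        · exact hin i hi
    _ = ∑ i ∈ S, g i := by
        rw [← sum_add_distrib]
        exact sum_congr rfl fun i _ => by ring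

lemma exists_card_eq_sum_mul_le {ι K : Type*} [Fintype ι] [CommRing K] [LinearOrder K]
    [IsStrictOrderedRing K] {k : ℕ} (hk : 1 ≤ k) (hkι : k ≤ Fintype.card ι) {g lam : ι → K}
    (hg : ∀ i, 0 ≤ g i) (hlam : ∀ i, lam i ∈ Set.Icc 0 1) (hsum : ∑ i, lam i ≤ k) :
    ∃ S : Finset ι, #S = k ∧ ∑ i, lam i * g i ≤ ∑ i ∈ S, g i := by
  obtain ⟨S, hS, hle⟩ := exists_card_eq_forall_le hkι g
  obtain ⟨i₀, hi₀, hmin⟩ := exists_min_image S g (card_pos.1 (by omega))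
  exact ⟨S, hS, sum_mul_le_sum_of_threshold (hg i₀) hmin (hle i₀ hi₀) hlam (by rwa [hS])⟩

/-- For `λ ∈ [0,1]ⁿ` with `Σ λᵢ ≤ k`,
`Σᵢ λᵢ I(U;Xᵢ) − I(U;X₁⋯Xₙ) ≤ Σ_{|S|=k} (Σ_{i∈S} H(Xᵢ) − H(X_S))`. -/
theorem hc_kwise_bound [Fintype Ω] {α υ : Type*} [Fintype α] [DecidableEq α]
    [Fintype υ] [DecidableEq υ]
    (p : Ω → ℝ) (hp0 : ∀ ω, 0 ≤ p ω) (hp1 : ∑ ω, p ω = 1)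
    (n k : ℕ) (hk1 : 1 ≤ k) (hkn : k ≤ n)
    (U : Ω → υ) (X : Fin n → Ω → α)
    (lam : Fin n → ℝ) (hl : ∀ i, lam i ∈ Set.Icc (0 : ℝ) 1)
    (hsum : ∑ i, lam i ≤ (k : ℝ)) :
    ∑ i, lam i * mi p U (X i) - mi p U (fun ω i => X i ω)
      ≤ ∑ S ∈ Finset.univ.powersetCard k,
          ((∑ i ∈ S, ent p (X i)) - ent p (fun ω (i : ↥S) => X i ω)) := by
  obtain ⟨S, hS, hlamS⟩ := exists_card_eq_sum_mul_le hk1 (by simpa using hkn)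
    (fun i => mi_nonneg hp0 hp1 U (X i)) hl hsum
  calc ∑ i, lam i * mi p U (X i) - mi p U (fun ω i => X i ω)
      ≤ ∑ i ∈ S, mi p U (X i) - mi p U (fun ω (i : S) => X i ω) :=
        sub_le_sub hlamS (mi_comp_le hp0 hp1 U (fun ω i => X i ω) fun x (i : S) => x i)
    _ ≤ ∑ i ∈ S, ent p (X i) - ent p (fun ω (i : S) => X i ω) := by
        simpa only [sum_coe_sort S fun i => mi p U (X i), sum_coe_sort S fun i => ent p (X i)]
          using sum_mi_sub_mi_le hp0 hp1 U fun i : S => X i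
    _ ≤ _ := by
        refine single_le_sum (f := fun T : Finset (Fin n) =>
          ∑ i ∈ T, ent p (X i) - ent p (fun ω (i : T) => X i ω)) (fun T _ => ?_)
          (mem_powersetCard.2 ⟨subset_univ S, hS⟩)
        simpa only [sum_coe_sort T fun i => ent p (X i), sub_nonneg]
          using ent_pi_le_sum hp0 hp1 fun i : T => X i
end

section
/- With the construction Xᵢ = A₀ + A₁ i + ⋯ + A_{k−1} i^{k−1} mod p (p > n prime, A₀,…,A_{k−1} i.i.d. uniform on ℤ/pℤ) and U = (A₀, …, A_{k−1}): if λ₁,…,λₙ ∈ [0,1] with Σᵢ λᵢ = k + ε for some ε > 0, then Σᵢ λᵢ I(U; Xᵢ) − I(U; X₁⋯Xₙ) = ε·log p > 0. Hence (λ₁,…,λₙ) is not in the hypercontractivity ribbon of (X₁,…,Xₙ). -/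
open Finset

variable {Ω : Type*}

/-! ### Auxiliary lemmas -/

lemma marg_of_injective [Fintype Ω] {α : Type*} [DecidableEq α]
    (q : Ω → ℝ) (X : Ω → α) (hX : Function.Injective X) (ω : Ω) :
    marg q X (X ω) = q ω := by
  unfold marg
  rw [Finset.sum_eq_single ω]
  · simp
  · intro b _ hb
    have : X b ≠ X ω := fun h => hb (hX h)
    simp [this]
  · simp

lemma marg_eq_zero_of [Fintype Ω] {α : Type*} [DecidableEq α]
    (q : Ω → ℝ) (X : Ω → α) {x : α} (hx : ∀ ω, X ω ≠ x) : marg q X x = 0 := by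
  unfold marg
  apply Finset.sum_eq_zero
  intro ω _
  simp [hx ω]

/-- Entropy of an injective function equals `∑ negMulLog (q ω)`. -/
lemma ent_of_injective [Fintype Ω] {α : Type*} [Fintype α] [DecidableEq α]
    (q : Ω → ℝ) (X : Ω → α) (hX : Function.Injective X) :
    ent q X = ∑ ω, Real.negMulLog (q ω) := by
  unfold ent
  have hsub : Finset.univ.image X ⊆ Finset.univ := Finset.subset_univ _
  rw [← Finset.sum_subset hsub]
  · rw [Finset.sum_image (fun a _ b _ h => hX h)]
    exact Finset.sum_congr rfl fun ω _ => by rw [marg_of_injective q X hX]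
  · intro x _ hx
    have : ∀ ω, X ω ≠ x := fun ω h => hx (Finset.mem_image.2 ⟨ω, Finset.mem_univ _, h⟩)
    rw [marg_eq_zero_of q X this]
    simp [Real.negMulLog]

lemma ent_of_const_marg [Fintype Ω] {α : Type*} [Fintype α] [DecidableEq α]
    (q : Ω → ℝ) (X : Ω → α) (c : ℝ) (h : ∀ x, marg q X x = c) :
    ent q X = (Fintype.card α : ℝ) * Real.negMulLog c := by
  unfold ent
  rw [Finset.sum_congr rfl fun x _ => by rw [h]]
  simp [Finset.card_univ, mul_comm]

lemma marg_sum_eq [Fintype Ω] {α : Type*} [Fintype α] [DecidableEq α]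
    (q : Ω → ℝ) (X : Ω → α) : ∑ x, marg q X x = ∑ ω, q ω := by
  unfold marg
  rw [Finset.sum_comm]
  simp

/-- The single-coordinate variable `A ↦ ∑ j, A j * c ^ j` has constant marginal
under a constant pmf. -/
lemma marg_eval_const (p k : ℕ) [NeZero p] (hk : 1 ≤ k) (c : ZMod p) (q0 : ℝ)
    (x y : ZMod p) :
    marg (fun _ : Fin k → ZMod p => q0) (fun A => ∑ j : Fin k, A j * c ^ (j : ℕ)) x
      = marg (fun _ : Fin k → ZMod p => q0) (fun A => ∑ j : Fin k, A j * c ^ (j : ℕ)) y := by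
  unfold marg
  set i0 : Fin k := ⟨0, hk⟩ with hi0
  set e : Fin k → ZMod p := Pi.single i0 (y - x) with he
  have hbij : Function.Bijective (fun A : Fin k → ZMod p => A + e) :=
    (Equiv.addRight e).bijective
  refine Fintype.sum_bijective _ hbij _ _ ?_
  intro A
  have hXe : ∑ j : Fin k, (A j + e j) * c ^ (j : ℕ)
      = (∑ j : Fin k, A j * c ^ (j : ℕ)) + (y - x) := by
    have h1 : ∑ j : Fin k, (A j + e j) * c ^ (j : ℕ)
        = (∑ j : Fin k, A j * c ^ (j : ℕ)) + ∑ j : Fin k, e j * c ^ (j : ℕ) := by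
      rw [← Finset.sum_add_distrib]
      exact Finset.sum_congr rfl fun j _ => by ring
    have h2 : ∑ j : Fin k, e j * c ^ (j : ℕ) = y - x := by
      rw [Finset.sum_eq_single i0]
      · simp [he, hi0]
      · intro b _ hb
        simp [he, Pi.single_eq_of_ne hb]
      · simp
    rw [h1, h2]
  have hiff : ((∑ j : Fin k, A j * c ^ (j : ℕ)) = x)
      ↔ ((∑ j : Fin k, (A j + e j) * c ^ (j : ℕ)) = y) := by
    rw [hXe]
    constructor
    · intro h; linear_combination h
    · intro h; linear_combination h
  simp only [Pi.add_apply]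
  exact if_congr hiff rfl rfl

/-- Injectivity of the vector of evaluations. -/
lemma eval_vec_injective (p n k : ℕ) (hp : p.Prime) (hn : n < p) (hk : 1 ≤ k) (hkn : k ≤ n) :
    Function.Injective (fun (A : Fin k → ZMod p) (i : Fin n) =>
      ∑ j : Fin k, A j * (((i : ℕ) + 1 : ℕ) : ZMod p) ^ (j : ℕ)) := by
  haveI := Fact.mk hp
  intro A B hAB
  set P : Polynomial (ZMod p) :=
    ∑ j : Fin k, Polynomial.C (A j - B j) * Polynomial.X ^ (j : ℕ) with hP
  have hdeg : P.natDegree < n := by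
    have h1 : P.natDegree ≤ k - 1 := by
      apply Polynomial.natDegree_sum_le_of_forall_le
      intro j _
      have := j.2
      refine le_trans (Polynomial.natDegree_C_mul_X_pow_le _ _) ?_
      omega
    omega
  have hf : Function.Injective (fun i : Fin n => (((i : ℕ) + 1 : ℕ) : ZMod p)) := by
    intro i j h
    have hi' := i.2
    have hj' := j.2
    have hi : (i : ℕ) + 1 < p := by omega
    have hj : (j : ℕ) + 1 < p := by omega
    have := congrArg ZMod.val h
    rw [ZMod.val_cast_of_lt hi, ZMod.val_cast_of_lt hj] at this
    exact Fin.ext (by omega)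
  have heval : ∀ i : Fin n, P.eval (((i : ℕ) + 1 : ℕ) : ZMod p) = 0 := by
    intro i
    have h0 := congrFun hAB i
    simp only at h0
    rw [hP, Polynomial.eval_finset_sum]
    simp only [Polynomial.eval_mul, Polynomial.eval_C, Polynomial.eval_pow, Polynomial.eval_X]
    have : ∑ j : Fin k, (A j - B j) * (((i : ℕ) + 1 : ℕ) : ZMod p) ^ (j : ℕ)
        = (∑ j : Fin k, A j * (((i : ℕ) + 1 : ℕ) : ZMod p) ^ (j : ℕ))
          - ∑ j : Fin k, B j * (((i : ℕ) + 1 : ℕ) : ZMod p) ^ (j : ℕ) := by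
      rw [← Finset.sum_sub_distrib]
      exact Finset.sum_congr rfl fun j _ => by ring
    rw [this, h0, sub_self]
  have hPzero : P = 0 :=
    Polynomial.eq_zero_of_natDegree_lt_card_of_eval_eq_zero P hf heval
      (by simpa using hdeg)
  funext j0
  have hcoeff : P.coeff (j0 : ℕ) = A j0 - B j0 := by
    rw [hP, Polynomial.finset_sum_coeff]
    rw [Finset.sum_eq_single j0]
    · simp [sub_mul, Polynomial.coeff_C_mul, Polynomial.coeff_X_pow]
    · intro b _ hb
      have : (j0 : ℕ) ≠ (b : ℕ) := fun h => hb (Fin.ext h.symm)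
      simp [sub_mul, Polynomial.coeff_C_mul, Polynomial.coeff_X_pow, this]
    · simp
  rw [hPzero] at hcoeff
  simp only [Polynomial.coeff_zero] at hcoeff
  exact sub_eq_zero.mp hcoeff.symm

/-- With `Xᵢ = A₀ + A₁ i + ⋯ + A_{k−1} i^{k−1}` over `ℤ/pℤ` (`p > n` prime, `A` uniform)
and `U = (A₀,…,A_{k−1})`: if `λ ∈ [0,1]ⁿ` and `Σ λᵢ = k + ε` with `ε > 0`, then
`Σ λᵢ I(U;Xᵢ) − I(U;X₁⋯Xₙ) = ε log p > 0`, so `λ` is not in the HC ribbon. -/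
theorem polynomial_counterexample_outside_ribbon (p n k : ℕ) (hp : p.Prime) [NeZero p]
    (hn : n < p) (hk : 1 ≤ k)
    (lam : Fin n → ℝ) (hl : ∀ i, lam i ∈ Set.Icc (0 : ℝ) 1)
    (ε : ℝ) (hε : 0 < ε) (hsum : ∑ i, lam i = (k : ℝ) + ε) :
    (∑ i, lam i *
          mi (fun _ : Fin k → ZMod p => 1 / (p : ℝ) ^ k) (fun A => A)
            (fun A => ∑ j : Fin k, A j * (((i : ℕ) + 1 : ℕ) : ZMod p) ^ (j : ℕ)))
        - mi (fun _ : Fin k → ZMod p => 1 / (p : ℝ) ^ k) (fun A => A)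
            (fun A (i : Fin n) => ∑ j : Fin k, A j * (((i : ℕ) + 1 : ℕ) : ZMod p) ^ (j : ℕ))
      = ε * Real.log p
    ∧ mi (fun _ : Fin k → ZMod p => 1 / (p : ℝ) ^ k) (fun A => A)
          (fun A (i : Fin n) => ∑ j : Fin k, A j * (((i : ℕ) + 1 : ℕ) : ZMod p) ^ (j : ℕ))
        < ∑ i, lam i *
            mi (fun _ : Fin k → ZMod p => 1 / (p : ℝ) ^ k) (fun A => A)
              (fun A => ∑ j : Fin k, A j * (((i : ℕ) + 1 : ℕ) : ZMod p) ^ (j : ℕ)) := by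
  have hp2 : 2 ≤ p := hp.two_le
  have hpR : (1 : ℝ) < (p : ℝ) := by exact_mod_cast hp2
  have hppos : (0 : ℝ) < (p : ℝ) := by linarith
  have hlogp : 0 < Real.log p := Real.log_pos hpR
  set q : (Fin k → ZMod p) → ℝ := fun _ => 1 / (p : ℝ) ^ k with hq
  have hcardΩ : (Fintype.card (Fin k → ZMod p) : ℝ) = (p : ℝ) ^ k := by
    rw [Fintype.card_fun, ZMod.card, Fintype.card_fin, Nat.cast_pow]
  have hpkne : ((p : ℝ) ^ k) ≠ 0 := by positivity
  -- negMulLog of the uniform weight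
  have hnml : Real.negMulLog (1 / (p : ℝ) ^ k) = (1 / (p : ℝ) ^ k) * ((k : ℝ) * Real.log p) := by
    rw [Real.negMulLog, one_div, Real.log_inv, Real.log_pow]
    ring
  -- the common value ∑ ω, negMulLog (q ω) = k log p
  have hS : ∑ ω : Fin k → ZMod p, Real.negMulLog (q ω) = (k : ℝ) * Real.log p := by
    rw [hq]
    simp only [Finset.sum_const, Finset.card_univ, nsmul_eq_mul, hnml]
    rw [hcardΩ]
    field_simp
  -- entropy of U
  have hentU : ent q (fun A : Fin k → ZMod p => A) = (k : ℝ) * Real.log p := by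
    rw [ent_of_injective q _ (fun a b h => h), hS]
  -- entropy of each Xᵢ
  have hentXi : ∀ i : Fin n,
      ent q (fun A : Fin k → ZMod p => ∑ j : Fin k, A j * (((i : ℕ) + 1 : ℕ) : ZMod p) ^ (j : ℕ))
        = Real.log p := by
    intro i
    set c : ZMod p := (((i : ℕ) + 1 : ℕ) : ZMod p)
    set X := fun A : Fin k → ZMod p => ∑ j : Fin k, A j * c ^ (j : ℕ) with hX
    have hconst : ∀ x y : ZMod p, marg q X x = marg q X y := fun x y =>
      marg_eval_const p k hk c (1 / (p : ℝ) ^ k) x y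
    have hmargsum : ∑ x : ZMod p, marg q X x = 1 := by
      rw [marg_sum_eq]
      simp only [hq, Finset.sum_const, Finset.card_univ, nsmul_eq_mul]
      rw [hcardΩ]
      field_simp
    have hmarg : ∀ x : ZMod p, marg q X x = 1 / (p : ℝ) := by
      intro x
      have h1 : ∑ y : ZMod p, marg q X y = ∑ _y : ZMod p, marg q X x :=
        Finset.sum_congr rfl fun y _ => (hconst y x)
      rw [hmargsum] at h1
      simp only [Finset.sum_const, Finset.card_univ, ZMod.card, nsmul_eq_mul] at h1
      have hpne : (p : ℝ) ≠ 0 := ne_of_gt hppos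
      field_simp at h1 ⊢
      linarith
    rw [ent_of_const_marg q X _ hmarg]
    rw [ZMod.card]
    have : Real.negMulLog (1 / (p : ℝ)) = (1 / (p : ℝ)) * Real.log p := by
      rw [Real.negMulLog, one_div, Real.log_inv]
      ring
    rw [this]
    field_simp
  -- entropy of (U, Xᵢ) pairs : injective first component
  have hentUXi : ∀ i : Fin n,
      ent q (fun A : Fin k → ZMod p =>
        (A, ∑ j : Fin k, A j * (((i : ℕ) + 1 : ℕ) : ZMod p) ^ (j : ℕ)))
        = (k : ℝ) * Real.log p := by
    intro i
    rw [ent_of_injective q _ (fun a b h => congrArg Prod.fst h), hS]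
  -- k ≤ n
  have hkn : k < n := by
    have h1 : ∑ i, lam i ≤ ∑ _i : Fin n, (1 : ℝ) :=
      Finset.sum_le_sum fun i _ => (hl i).2
    simp only [Finset.sum_const, Finset.card_univ, Fintype.card_fin, nsmul_eq_mul,
      mul_one] at h1
    rw [hsum] at h1
    have : (k : ℝ) < (n : ℝ) := by linarith
    exact_mod_cast this
  -- entropy of the vector
  have hinj := eval_vec_injective p n k hp hn hk (le_of_lt hkn)
  have hentXvec :
      ent q (fun (A : Fin k → ZMod p) (i : Fin n) =>
        ∑ j : Fin k, A j * (((i : ℕ) + 1 : ℕ) : ZMod p) ^ (j : ℕ))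
        = (k : ℝ) * Real.log p := by
    rw [ent_of_injective q _ hinj, hS]
  have hentUXvec :
      ent q (fun A : Fin k → ZMod p =>
        (A, fun i : Fin n => ∑ j : Fin k, A j * (((i : ℕ) + 1 : ℕ) : ZMod p) ^ (j : ℕ)))
        = (k : ℝ) * Real.log p := by
    rw [ent_of_injective q _ (fun a b h => congrArg Prod.fst h), hS]
  -- mutual informations
  have hmiXi : ∀ i : Fin n,
      mi q (fun A => A)
        (fun A : Fin k → ZMod p => ∑ j : Fin k, A j * (((i : ℕ) + 1 : ℕ) : ZMod p) ^ (j : ℕ))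
        = Real.log p := by
    intro i
    rw [mi, hentU, hentXi i, hentUXi i]
    ring
  have hmiXvec :
      mi q (fun A => A)
        (fun (A : Fin k → ZMod p) (i : Fin n) =>
          ∑ j : Fin k, A j * (((i : ℕ) + 1 : ℕ) : ZMod p) ^ (j : ℕ))
        = (k : ℝ) * Real.log p := by
    rw [mi, hentU, hentXvec, hentUXvec]
    ring
  have hsumlam : ∑ i, lam i *
      mi q (fun A => A)
        (fun A : Fin k → ZMod p => ∑ j : Fin k, A j * (((i : ℕ) + 1 : ℕ) : ZMod p) ^ (j : ℕ))
      = ((k : ℝ) + ε) * Real.log p := by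
    rw [Finset.sum_congr rfl fun i _ => by rw [hmiXi i], ← Finset.sum_mul, hsum]
  constructor
  · rw [hsumlam, hmiXvec]; ring
  · rw [hsumlam, hmiXvec]
    nlinarith
end

section
/- Let Φ : D → ℝ (D ⊆ ℝ convex) be convex. Define the Φ-mutual information I_Φ(X;Y) = Σ_{x,y} p(x)p(y) Φ(p(x,y)/(p(x)p(y))) − Φ(1) for finite random variables with full-support marginals. If Y = g(X) is a function of X, then I_Φ(X; Y) = I_Φ(Y; Y). -/
open Finset

variable {Ω : Type*}

/-- The Φ-mutual information
`I_Φ(X;Y) = Σ_{x,y} p(x) p(y) Φ(p(x,y)/(p(x)p(y))) − Φ(1)`. -/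
noncomputable def miPhi [Fintype Ω] {α β : Type*} [Fintype α] [DecidableEq α]
    [Fintype β] [DecidableEq β] (Φ : ℝ → ℝ) (p : Ω → ℝ) (X : Ω → α) (Y : Ω → β) : ℝ :=
  (∑ x, ∑ y, marg p X x * marg p Y y *
      Φ (marg p (fun ω => (X ω, Y ω)) (x, y) / (marg p X x * marg p Y y))) - Φ 1

lemma marg_sum [Fintype Ω] {α : Type*} [Fintype α] [DecidableEq α]
    (p : Ω → ℝ) (X : Ω → α) : ∑ x, marg p X x = ∑ ω, p ω := by
  unfold marg
  rw [Finset.sum_comm]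
  simp

lemma marg_comp [Fintype Ω] {α β : Type*} [Fintype α] [DecidableEq α] [DecidableEq β]
    (p : Ω → ℝ) (X : Ω → α) (g : α → β) (y : β) :
    marg p (fun ω => g (X ω)) y = ∑ x, if g x = y then marg p X x else 0 := by
  unfold marg
  have : ∀ x : α, (if g x = y then ∑ ω, (if X ω = x then p ω else 0) else 0)
      = ∑ ω, (if X ω = x then (if g x = y then p ω else 0) else 0) := by
    intro x
    split_ifs with h
    · simp [h]
    · simp [h]
  simp only [this]
  rw [Finset.sum_comm]
  refine Finset.sum_congr rfl fun ω _ => ?_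
  rw [Finset.sum_eq_single (X ω)]
  · simp
  · intro x _ hx
    rw [if_neg (fun h => hx h.symm)]
  · simp

lemma marg_pair [Fintype Ω] {α β : Type*} [DecidableEq α] [DecidableEq β]
    (p : Ω → ℝ) (X : Ω → α) (g : α → β) (x : α) (y : β) :
    marg p (fun ω => (X ω, g (X ω))) (x, y) = if g x = y then marg p X x else 0 := by
  unfold marg
  split_ifs with h
  · refine Finset.sum_congr rfl fun ω _ => ?_
    by_cases hx : X ω = x
    · simp [hx, h]
    · simp [Prod.ext_iff, hx]
  · refine Finset.sum_eq_zero fun ω _ => ?_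
    simp only [Prod.mk.injEq, ite_eq_right_iff]
    rintro ⟨h1, h2⟩
    exact absurd (h1 ▸ h2) h

lemma marg_diag [Fintype Ω] {β : Type*} [DecidableEq β]
    (p : Ω → ℝ) (Z : Ω → β) (y y' : β) :
    marg p (fun ω => (Z ω, Z ω)) (y, y') = if y = y' then marg p Z y else 0 := by
  unfold marg
  split_ifs with h
  · refine Finset.sum_congr rfl fun ω _ => ?_
    by_cases hz : Z ω = y
    · simp [hz, ← h]
    · simp [Prod.ext_iff, hz]
  · refine Finset.sum_eq_zero fun ω _ => ?_
    simp only [Prod.mk.injEq, ite_eq_right_iff]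
    rintro ⟨h1, h2⟩
    exact absurd (h1 ▸ h2) h

lemma key_sum {α β : Type*} [Fintype α] [Fintype β] [DecidableEq β]
    (Φ : ℝ → ℝ) (a : α → ℝ) (b : β → ℝ) (c : α → β)
    (ha : ∀ x, a x ≠ 0) (hb0 : ∀ y, b y ≠ 0)
    (hsa : ∑ x, a x = 1)
    (hcb : ∀ y, ∑ x, (if c x = y then a x else 0) = b y) :
    (∑ x, ∑ y, a x * b y * Φ ((if c x = y then a x else 0) / (a x * b y)))
      = ∑ y, (b y * b y * Φ (1 / b y) + (1 - b y) * b y * Φ 0) := by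
  have step : ∀ x y, a x * b y * Φ ((if c x = y then a x else 0) / (a x * b y))
      = (if c x = y then a x else 0) * (b y * Φ (1 / b y))
        + (a x - (if c x = y then a x else 0)) * (b y * Φ 0) := by
    intro x y
    split_ifs with h
    · have hx := ha x
      have hy := hb0 y
      have : a x / (a x * b y) = 1 / b y := by
        field_simp
      rw [this]; ring
    · rw [zero_div]; ring
  simp only [step]
  rw [Finset.sum_comm]
  refine Finset.sum_congr rfl fun y _ => ?_
  rw [Finset.sum_add_distrib, ← Finset.sum_mul, ← Finset.sum_mul,
      Finset.sum_sub_distrib, hcb, hsa]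
  ring

/-- If `Y = g(X)` then `I_Φ(X;Y) = I_Φ(Y;Y)`. -/
theorem miPhi_of_function [Fintype Ω] {α β : Type*} [Fintype α] [DecidableEq α]
    [Fintype β] [DecidableEq β]
    (Φ : ℝ → ℝ) (hΦ : ConvexOn ℝ (Set.Ici 0) Φ)
    (p : Ω → ℝ) (hp0 : ∀ ω, 0 ≤ p ω) (hp1 : ∑ ω, p ω = 1)
    (X : Ω → α) (g : α → β)
    (hX : ∀ a, 0 < marg p X a) (hY : ∀ b, 0 < marg p (fun ω => g (X ω)) b) :
    miPhi Φ p X (fun ω => g (X ω))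
      = miPhi Φ p (fun ω => g (X ω)) (fun ω => g (X ω)) := by
  classical
  unfold miPhi
  congr 1
  have hSa : ∑ x, marg p X x = 1 := by rw [marg_sum, hp1]
  have hSb : ∑ y, marg p (fun ω => g (X ω)) y = 1 := by rw [marg_sum, hp1]
  have hcb : ∀ y, ∑ x, (if g x = y then marg p X x else 0) = marg p (fun ω => g (X ω)) y :=
    fun y => (marg_comp p X g y).symm
  have hdiag : ∀ y : β, ∑ y', (if (y' : β) = y then marg p (fun ω => g (X ω)) y' else 0)
      = marg p (fun ω => g (X ω)) y := by
    intro y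
    rw [Finset.sum_eq_single y] <;> simp +contextual
  calc (∑ x, ∑ y, marg p X x * marg p (fun ω => g (X ω)) y *
          Φ (marg p (fun ω => (X ω, g (X ω))) (x, y) /
            (marg p X x * marg p (fun ω => g (X ω)) y)))
      = ∑ x, ∑ y, marg p X x * marg p (fun ω => g (X ω)) y *
          Φ ((if g x = y then marg p X x else 0) /
            (marg p X x * marg p (fun ω => g (X ω)) y)) := by
        simp only [marg_pair]
    _ = ∑ y, (marg p (fun ω => g (X ω)) y * marg p (fun ω => g (X ω)) y *
            Φ (1 / marg p (fun ω => g (X ω)) y)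
          + (1 - marg p (fun ω => g (X ω)) y) * marg p (fun ω => g (X ω)) y * Φ 0) := by
        exact key_sum Φ (marg p X) (marg p (fun ω => g (X ω))) g
          (fun x => (hX x).ne') (fun y => (hY y).ne') hSa hcb
    _ = ∑ y, ∑ y', marg p (fun ω => g (X ω)) y * marg p (fun ω => g (X ω)) y' *
          Φ ((if (y : β) = y' then marg p (fun ω => g (X ω)) y else 0) /
            (marg p (fun ω => g (X ω)) y * marg p (fun ω => g (X ω)) y')) := by
        refine (key_sum Φ (marg p (fun ω => g (X ω))) (marg p (fun ω => g (X ω)))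
          (fun y => y) (fun y => (hY y).ne') (fun y => (hY y).ne') hSb hdiag).symm
    _ = ∑ y, ∑ y', marg p (fun ω => g (X ω)) y * marg p (fun ω => g (X ω)) y' *
          Φ (marg p (fun ω => (g (X ω), g (X ω))) (y, y') /
            (marg p (fun ω => g (X ω)) y * marg p (fun ω => g (X ω)) y')) := by
        simp only [marg_diag]
end

section
/- Let Φ : ℝ → ℝ be four times continuously differentiable with Φ'' ≥ 0 and with (s,t) ↦ Φ''(s)t² jointly convex (equivalently Φ''''Φ'' ≥ 2(Φ''')², class 𝔉). Let M ∈ ℝ, Z ∈ ℝ be such that M ± Z lie in the domain, and define ψ(t) = Φ(M + √t Z) + Φ(M − √t Z) − 2Φ(M) for t ∈ [0,1]. Then ψ is convex on [0,1], and consequently for all λ ∈ [0,1]: Φ(M + λZ) + Φ(M − λZ) − 2Φ(M) ≤ λ²(Φ(M + Z) + Φ(M − Z) − 2Φ(M)). -/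
/-! With `F s = Φ (M + s Z) + Φ (M - s Z) - 2 Φ M` we have `ψ = F ∘ √·`, whose derivative is
`F' (√t) / (2 √t)`, so `ψ` is convex as soon as the secant slope `F' s / s` of `F'` through
`F' 0 = 0` is nondecreasing, e.g. when `F'` is convex on `[0, ∞)`. That in turn follows from
`F'' s = Z² (Φ'' (M + s Z) + Φ'' (M - s Z))` being nondecreasing on `[0, ∞)`: it is even, and
convex because it is the sum of the jointly convex `(a, b) ↦ Φ'' a * b²` along the two lines
`s ↦ (M ± s Z, ± Z)`. Finally `ψ 0 = 0` turns convexity into `ψ (λ²) ≤ λ² ψ 1`. -/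

open Set

lemma ConvexOn.comp_line {E : Type*} [AddCommGroup E] [Module ℝ E] {g : E → ℝ}
    (hg : ConvexOn ℝ univ g) (p v : E) : ConvexOn ℝ univ (fun s : ℝ => g (p + s • v)) := by
  simpa [Function.comp_def] using
    (hg.translate_right p).comp_linearMap (LinearMap.toSpanSingleton ℝ E v)

lemma ConvexOn.monotoneOn_Ici_of_even {g : ℝ → ℝ} (hg : ConvexOn ℝ univ g) (heven : g.Even) :
    MonotoneOn g (Ici 0) := by
  intro a (ha : 0 ≤ a) b (hb : 0 ≤ b) hab
  rcases hb.eq_or_lt with rfl | hb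
  · rw [le_antisymm hab ha]
  have hpos : 0 < a - -b := by linarith
  -- the secant of `g` from `-b` to `b` is horizontal, so the one from `-b` to `a ≤ b` descends
  have hslope := hg.secant_mono (mem_univ (-b)) (mem_univ a) (mem_univ b)
    (by linarith) (by linarith) hab
  rw [heven b, sub_self, zero_div, div_le_iff₀ hpos, zero_mul] at hslope
  linarith

lemma convexOn_Ici_of_hasDerivAt_of_even_convexOn {f f' : ℝ → ℝ}
    (hf : ∀ x, HasDerivAt f (f' x) x) (hf' : ConvexOn ℝ univ f') (heven : f'.Even) :
    ConvexOn ℝ (Ici 0) f := by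
  refine MonotoneOn.convexOn_of_deriv (convex_Ici 0)
    (fun x _ => (hf x).continuousAt.continuousWithinAt)
    (fun x _ => (hf x).differentiableAt.differentiableWithinAt) ?_
  rw [interior_Ici, (funext fun x => (hf x).deriv : deriv f = f')]
  exact (hf'.monotoneOn_Ici_of_even heven).mono Ioi_subset_Ici_self

lemma convexOn_comp_sqrt {F F' : ℝ → ℝ} (hF : ∀ x, 0 ≤ x → HasDerivAt F (F' x) x)
    (hF' : ConvexOn ℝ (Ici 0) F') (hF'0 : F' 0 = 0) : ConvexOn ℝ (Ici 0) (F ∘ Real.sqrt) := by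
  have hderiv : ∀ t, 0 < t → HasDerivAt (F ∘ Real.sqrt) (F' √t / √t / 2) t := fun t ht =>
    ((hF √t (Real.sqrt_nonneg t)).comp t (Real.hasDerivAt_sqrt ht.ne')).congr_deriv (by ring)
  refine MonotoneOn.convexOn_of_deriv (convex_Ici 0)
    (fun t _ => ((hF √t (Real.sqrt_nonneg t)).continuousAt.comp
      Real.continuous_sqrt.continuousAt).continuousWithinAt)
    (fun t ht => (hderiv t (interior_Ici.subset ht)).differentiableAt.differentiableWithinAt) ?_
  rw [interior_Ici]
  intro x (hx : 0 < x) y (hy : 0 < y) hxy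
  rw [(hderiv x hx).deriv, (hderiv y hy).deriv]
  have hsecant := hF'.secant_mono self_mem_Ici (Real.sqrt_nonneg x) (Real.sqrt_nonneg y)
    (Real.sqrt_pos.2 hx).ne' (Real.sqrt_pos.2 hy).ne' (Real.sqrt_le_sqrt hxy)
  simp only [hF'0, sub_zero] at hsecant
  gcongr

lemma ConvexOn.le_mul_of_map_zero {g : ℝ → ℝ} (hg : ConvexOn ℝ (Icc 0 1) g) (h0 : g 0 = 0)
    {t : ℝ} (ht : t ∈ Icc 0 1) : g t ≤ t * g 1 := by
  have := hg.2 (left_mem_Icc.2 zero_le_one) (right_mem_Icc.2 zero_le_one) (sub_nonneg.2 ht.2) ht.1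
    (sub_add_cancel 1 t)
  simpa [h0] using this

section Symmetrization

variable {g g' : ℝ → ℝ} (hg : ∀ x, HasDerivAt g (g' x) x) (M Z s : ℝ)
include hg

lemma hasDerivAt_comp_add_add_comp_sub :
    HasDerivAt (fun s => g (M + s * Z) + g (M - s * Z))
      ((g' (M + s * Z) - g' (M - s * Z)) * Z) s := by
  have hplus := (hg _).comp s (((hasDerivAt_id s).mul_const Z).const_add M)
  have hminus := (hg _).comp s (((hasDerivAt_id s).mul_const Z).const_sub M)
  exact (hplus.add hminus).congr_deriv (by simp only [id]; ring)

lemma hasDerivAt_comp_add_sub_comp_sub :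
    HasDerivAt (fun s => g (M + s * Z) - g (M - s * Z))
      ((g' (M + s * Z) + g' (M - s * Z)) * Z) s := by
  have hplus := (hg _).comp s (((hasDerivAt_id s).mul_const Z).const_add M)
  have hminus := (hg _).comp s (((hasDerivAt_id s).mul_const Z).const_sub M)
  exact (hplus.sub hminus).congr_deriv (by simp only [id]; ring)

end Symmetrization

lemma hasDerivAt_iteratedDeriv {f : ℝ → ℝ} {n : WithTop ℕ∞} {m : ℕ} (hf : ContDiff ℝ n f)
    (hmn : m < n) (x : ℝ) : HasDerivAt (iteratedDeriv m f) (iteratedDeriv (m + 1) f x) x := by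
  rw [iteratedDeriv_succ]
  exact (hf.differentiable_iteratedDeriv m hmn x).hasDerivAt

theorem dsbs_scalar_sdpi_general (Φ : ℝ → ℝ) (hC4 : ContDiff ℝ 4 Φ)
    (hjc : ConvexOn ℝ Set.univ (fun q : ℝ × ℝ => iteratedDeriv 2 Φ q.1 * q.2 ^ 2))
    (M Z : ℝ) :
    ConvexOn ℝ (Set.Icc 0 1)
        (fun t => Φ (M + Real.sqrt t * Z) + Φ (M - Real.sqrt t * Z) - 2 * Φ M) ∧
    ∀ lam : ℝ, 0 ≤ lam → lam ≤ 1 →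
      Φ (M + lam * Z) + Φ (M - lam * Z) - 2 * Φ M
        ≤ lam ^ 2 * (Φ (M + Z) + Φ (M - Z) - 2 * Φ M) := by
  set F : ℝ → ℝ := fun s => Φ (M + s * Z) + Φ (M - s * Z) - 2 * Φ M
  set F' : ℝ → ℝ := fun s => (iteratedDeriv 1 Φ (M + s * Z) - iteratedDeriv 1 Φ (M - s * Z)) * Z
  set F'' : ℝ → ℝ := fun s =>
    (iteratedDeriv 2 Φ (M + s * Z) + iteratedDeriv 2 Φ (M - s * Z)) * Z * Z
  have hF (s : ℝ) : HasDerivAt F (F' s) s := by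
    refine (hasDerivAt_comp_add_add_comp_sub (fun x => ?_) M Z s).sub_const (2 * Φ M)
    simpa only [iteratedDeriv_zero, zero_add] using
      hasDerivAt_iteratedDeriv hC4 (m := 0) (by norm_num) x
  have hF' (s : ℝ) : HasDerivAt F' (F'' s) s :=
    (hasDerivAt_comp_add_sub_comp_sub (hasDerivAt_iteratedDeriv hC4 (m := 1) (by norm_num))
      M Z s).mul_const Z
  have hF''_convex : ConvexOn ℝ univ F'' := by
    refine ((hjc.comp_line (M, Z) (Z, 0)).add (hjc.comp_line (M, -Z) (-Z, 0))).congr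
      fun s _ => ?_
    simp only [F'', Pi.add_apply, Prod.smul_mk, Prod.mk_add_mk, smul_eq_mul, mul_zero, add_zero,
      mul_neg, ← sub_eq_add_neg]
    ring
  have hF''_even : F''.Even := fun s => by
    simp only [F'', neg_mul, sub_neg_eq_add, ← sub_eq_add_neg]
    ring
  have hψ : ConvexOn ℝ (Ici 0) (F ∘ Real.sqrt) :=
    convexOn_comp_sqrt (fun x _ => hF x)
      (convexOn_Ici_of_hasDerivAt_of_even_convexOn hF' hF''_convex hF''_even) (by simp [F'])
  have hψ01 := hψ.subset Icc_subset_Ici_self (convex_Icc 0 1)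
  refine ⟨hψ01, fun lam h0 h1 => ?_⟩
  have := hψ01.le_mul_of_map_zero (by simp [F]; ring) ⟨sq_nonneg lam, pow_le_one₀ h0 h1⟩
  simpa [F, Real.sqrt_sq h0] using this

/-- Scalar case of the matrix SDPI computation for the DSBS: if `Φ` is `C⁴` with
`Φ'' ≥ 0` and `(s,t) ↦ Φ''(s) t²` jointly convex, then
`ψ(t) = Φ(M + √t Z) + Φ(M − √t Z) − 2Φ(M)` is convex on `[0,1]`, and consequently
`Φ(M + λZ) + Φ(M − λZ) − 2Φ(M) ≤ λ² (Φ(M + Z) + Φ(M − Z) − 2Φ(M))` for `λ ∈ [0,1]`. -/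
theorem dsbs_scalar_sdpi (Φ : ℝ → ℝ) (hC4 : ContDiff ℝ 4 Φ)
    (hΦ'' : ∀ s : ℝ, 0 ≤ iteratedDeriv 2 Φ s)
    (hjc : ConvexOn ℝ Set.univ (fun q : ℝ × ℝ => iteratedDeriv 2 Φ q.1 * q.2 ^ 2))
    (M Z : ℝ) :
    ConvexOn ℝ (Set.Icc 0 1)
        (fun t => Φ (M + Real.sqrt t * Z) + Φ (M - Real.sqrt t * Z) - 2 * Φ M) ∧
    ∀ lam : ℝ, 0 ≤ lam → lam ≤ 1 →
      Φ (M + lam * Z) + Φ (M - lam * Z) - 2 * Φ M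
        ≤ lam ^ 2 * (Φ (M + Z) + Φ (M - Z) - 2 * Φ M) :=
  dsbs_scalar_sdpi_general Φ hC4 hjc M Z
end
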